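/- arXiv:2603.22702 — 6 statements merged into one kernel-verified Lean document; each statement's English description precedes it below -/
import Mathlib

section
/- Let $n$ be a positive integer and let $S\subseteq [n]\times[n]$ be a symmetric set (i.e., $(i,j)\in S$ implies $(j,i)\in S$). Then for any real numbers $x_1,\dots,x_n$ we have $\sqrt{|S|}\cdot\sum_{i=1}^n x_i^2 \ge \sum_{(i,j)\in S} x_i x_j$. -/
open Finset

theorem stmt2 (n : ℕ) (S : Finset (Fin n × Fin n))
    (hsymm : ∀ i j : Fin n, (i, j) ∈ S → (j, i) ∈ S) (x : Fin n → ℝ) :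
    ∑ q ∈ S, x q.1 * x q.2 ≤ Real.sqrt (S.card : ℝ) * ∑ i, (x i) ^ 2 := by
  classical
  set a : Fin n → Fin n → ℝ := fun i j => if (i, j) ∈ S then 1 else 0 with ha
  have ha0 : ∀ i j, 0 ≤ a i j := by
    intro i j; by_cases h : (i, j) ∈ S <;> simp [ha, h]
  have ha1 : ∀ i j, a i j ≤ 1 := by
    intro i j; by_cases h : (i, j) ∈ S <;> simp [ha, h]
  have hasq : ∀ i j, a i j ^ 2 = a i j := by
    intro i j; by_cases h : (i, j) ∈ S <;> simp [ha, h]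
  set Y : Fin n → ℝ := fun i => ∑ j, a i j * x j with hY
  set P : ℝ := ∑ i, (x i) ^ 2 with hP
  have hP0 : 0 ≤ P := Finset.sum_nonneg fun i _ => sq_nonneg _
  -- rewrite LHS
  have hL : ∑ q ∈ S, x q.1 * x q.2 = ∑ i, x i * Y i := by
    have : ∑ q ∈ S, x q.1 * x q.2
        = ∑ q : Fin n × Fin n, (if q ∈ S then x q.1 * x q.2 else 0) := by
      rw [Finset.sum_ite_mem, Finset.univ_inter]
    rw [this, Fintype.sum_prod_type]
    simp only [hY, Finset.mul_sum]
    refine Finset.sum_congr rfl fun i _ => Finset.sum_congr rfl fun j _ => ?_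
    by_cases h : (i, j) ∈ S <;> simp [ha, h] <;> ring
  -- rewrite card
  have hcard : (S.card : ℝ) = ∑ i, ∑ j, a i j := by
    have : (∑ q : Fin n × Fin n, (if q ∈ S then (1 : ℝ) else 0)) = S.card := by
      rw [Finset.sum_ite_mem, Finset.univ_inter, Finset.sum_const, nsmul_eq_mul, mul_one]
    rw [← this, Fintype.sum_prod_type]
  have hcard0 : 0 ≤ (S.card : ℝ) := Nat.cast_nonneg _
  -- bound ∑ Y² ≤ card * P
  have hQ : ∑ i, Y i ^ 2 ≤ (S.card : ℝ) * P := by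
    have step1 : ∀ i, Y i ^ 2 ≤ (∑ j, a i j) * ∑ j, a i j * x j ^ 2 := by
      intro i
      have h := Finset.sum_mul_sq_le_sq_mul_sq Finset.univ (fun j => a i j)
        (fun j => a i j * x j)
      calc Y i ^ 2 = (∑ j, a i j * (a i j * x j)) ^ 2 := by
            rw [hY]
            congr 1
            refine Finset.sum_congr rfl fun j _ => ?_
            by_cases h : (i, j) ∈ S <;> simp [ha, h]
        _ ≤ (∑ j, a i j ^ 2) * ∑ j, (a i j * x j) ^ 2 := h
        _ = (∑ j, a i j) * ∑ j, a i j * x j ^ 2 := by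
            congr 1
            · exact Finset.sum_congr rfl fun j _ => hasq i j
            · refine Finset.sum_congr rfl fun j _ => ?_
              rw [mul_pow, hasq]
    calc ∑ i, Y i ^ 2 ≤ ∑ i, (∑ j, a i j) * ∑ j, a i j * x j ^ 2 :=
          Finset.sum_le_sum fun i _ => step1 i
      _ = ∑ i, ∑ j, x j ^ 2 * (a i j * ∑ k, a i k) := by
          refine Finset.sum_congr rfl fun i _ => ?_
          rw [Finset.mul_sum]
          exact Finset.sum_congr rfl fun j _ => by ring
      _ = ∑ j, x j ^ 2 * ∑ i, a i j * ∑ k, a i k := by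
          rw [Finset.sum_comm]
          exact Finset.sum_congr rfl fun j _ => (Finset.mul_sum _ _ _).symm
      _ ≤ ∑ j, x j ^ 2 * (S.card : ℝ) := by
          refine Finset.sum_le_sum fun j _ => ?_
          refine mul_le_mul_of_nonneg_left ?_ (sq_nonneg _)
          rw [hcard]
          refine Finset.sum_le_sum fun i _ => ?_
          exact mul_le_of_le_one_left (Finset.sum_nonneg fun k _ => ha0 i k) (ha1 i j)
      _ = (S.card : ℝ) * P := by rw [hP, ← Finset.sum_mul, mul_comm]
  -- finish
  rw [hL]
  calc ∑ i, x i * Y i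
      ≤ Real.sqrt (∑ i, x i ^ 2) * Real.sqrt (∑ i, Y i ^ 2) :=
        Real.sum_mul_le_sqrt_mul_sqrt _ _ _
    _ ≤ Real.sqrt P * Real.sqrt ((S.card : ℝ) * P) := by
        refine mul_le_mul_of_nonneg_left (Real.sqrt_le_sqrt hQ) (Real.sqrt_nonneg _)
    _ = Real.sqrt (S.card : ℝ) * P := by
        rw [Real.sqrt_mul hcard0, ← mul_assoc, mul_comm (Real.sqrt P),
          mul_assoc, Real.mul_self_sqrt hP0]
end

section
/- Let $\mathcal{H}$ be a nonempty family of Boolean-valued functions on a finite domain $\Lambda$, let $f:\Lambda\to\{0,1\}$, and let $\mu$ be a probability distribution over $\Lambda$. If $S\subseteq\Lambda$ is a vertex cover of minimum possible $\mu$-measure of the violation hypergraph of $f$ against $\mathcal{H}$, then $\mu(S)=\min_{h\in\mathcal{H}}\Pr_{x\sim\mu}[f(x)\ne h(x)]$. -/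
open Finset

/-- `S` is an `f`-violation of `ℋ`: no member of `ℋ` agrees with `f` on `S`. -/
def IsViolation {Λ : Type} (ℋ : Set (Λ → Bool)) (f : Λ → Bool) (S : Finset Λ) : Prop :=
  ¬ ∃ h ∈ ℋ, ∀ x ∈ S, f x = h x

/-- `S` is a minimal `f`-violation of `ℋ`. -/
def IsMinimalViolation {Λ : Type} (ℋ : Set (Λ → Bool)) (f : Λ → Bool)
    (S : Finset Λ) : Prop :=
  IsViolation ℋ f S ∧ ∀ T ⊂ S, ¬ IsViolation ℋ f T

/-- `C` is a vertex cover of the violation hypergraph of `f` against `ℋ`. -/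
def IsViolationCover {Λ : Type} [DecidableEq Λ] (ℋ : Set (Λ → Bool)) (f : Λ → Bool)
    (C : Finset Λ) : Prop :=
  ∀ S : Finset Λ, IsMinimalViolation ℋ f S → (S ∩ C).Nonempty

theorem stmt5 {Λ : Type} [Fintype Λ] [DecidableEq Λ]
    (ℋ : Set (Λ → Bool)) (hne : ℋ.Nonempty) (f : Λ → Bool)
    (μ : Λ → ℝ) (hμ0 : ∀ x, 0 ≤ μ x) (hμ1 : ∑ x, μ x = 1)
    (C : Finset Λ) (hC : IsViolationCover ℋ f C)
    (hmin : ∀ C' : Finset Λ, IsViolationCover ℋ f C' →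
      ∑ x ∈ C, μ x ≤ ∑ x ∈ C', μ x) :
    IsLeast {r : ℝ | ∃ h ∈ ℋ,
        r = ∑ x ∈ Finset.univ.filter (fun x => f x ≠ h x), μ x}
      (∑ x ∈ C, μ x) := by
  classical
  -- For any h ∈ ℋ, the disagreement set is a vertex cover.
  have cover_of_mem : ∀ h ∈ ℋ,
      IsViolationCover ℋ f (Finset.univ.filter (fun x => f x ≠ h x)) := by
    intro h hh S hS
    by_contra hemp
    rw [Finset.not_nonempty_iff_eq_empty] at hemp
    apply hS.1
    refine ⟨h, hh, fun x hx => ?_⟩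
    by_contra hne'
    have : x ∈ S ∩ Finset.univ.filter (fun x => f x ≠ h x) := by
      simp [hx, hne']
    simp [hemp] at this
  -- univ \ C is not a violation
  have hnv : ¬ IsViolation ℋ f (Finset.univ \ C) := by
    intro hv
    have hVne : ((Finset.univ \ C).powerset.filter
        (fun T => IsViolation ℋ f T)).Nonempty :=
      ⟨Finset.univ \ C, by simp [hv]⟩
    obtain ⟨T, hT, hTmin⟩ := Finset.exists_min_image _ Finset.card hVne
    simp only [Finset.mem_filter, Finset.mem_powerset] at hT
    have hTminv : IsMinimalViolation ℋ f T := by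
      refine ⟨hT.2, fun T' hT' hvT' => ?_⟩
      have hle := hTmin T' (by
        simp only [Finset.mem_filter, Finset.mem_powerset]
        exact ⟨hT'.subset.trans hT.1, hvT'⟩)
      exact absurd hle (not_le.mpr (Finset.card_lt_card hT'))
    obtain ⟨x, hx⟩ := hC T hTminv
    simp only [Finset.mem_inter] at hx
    have := hT.1 hx.1
    simp [hx.2] at this
  rw [IsViolation] at hnv
  push_neg at hnv
  obtain ⟨h, hh, hag⟩ := hnv
  -- disagreement set of h is contained in C
  have hsub : Finset.univ.filter (fun x => f x ≠ h x) ⊆ C := by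
    intro x hx
    simp only [Finset.mem_filter] at hx
    by_contra hxc
    exact hx.2 (hag x (by simp [hxc]))
  have hle1 : ∑ x ∈ Finset.univ.filter (fun x => f x ≠ h x), μ x ≤ ∑ x ∈ C, μ x :=
    Finset.sum_le_sum_of_subset_of_nonneg hsub (fun x _ _ => hμ0 x)
  have hle2 := hmin _ (cover_of_mem h hh)
  constructor
  · exact ⟨h, hh, le_antisymm hle2 hle1⟩
  · rintro r ⟨h', hh', rfl⟩
    exact hmin _ (cover_of_mem h' hh')
end

section
/- Let $\varepsilon\in(0,1)$ and let $G=(V,E)$ be a $k$-uniform hypergraph. Suppose $p\in[0,1]^V$ is a sub-probability vector (i.e., $\sum_{v\in V}p_v\le 1$) such that every vertex cover $C$ of $G$ satisfies $\sum_{v\in C}p_v\ge\varepsilon$. Then there exists a vector $\lambda\in[0,1]^E$ with $\sum_{e\in E}\lambda_e\le 1$ such that: (1) the indicator vectors $1_e\in\{0,1\}^V$ for $e$ in the support of $\lambda$ are linearly independent in $\mathbb{R}^V$; (2) $\sum_{e\in E}\lambda_e\cdot 1_e\preceq p$ coordinatewise; and (3) $\varepsilon/k\le\sum_{e\in E}\lambda_e\le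 1/k$. -/
open Finset

theorem stmt6 {V : Type} [Fintype V] [DecidableEq V] (k : ℕ) (hk : 0 < k)
    (E : Finset (Finset V)) (hunif : ∀ e ∈ E, e.card = k)
    (ε : ℝ) (hε0 : 0 < ε) (hε1 : ε < 1)
    (p : V → ℝ) (hp0 : ∀ v, 0 ≤ p v) (hp1 : ∀ v, p v ≤ 1) (hsub : ∑ v, p v ≤ 1)
    (hcover : ∀ C : Finset V, (∀ e ∈ E, (e ∩ C).Nonempty) → ε ≤ ∑ v ∈ C, p v) :
    ∃ lam : Finset V → ℝ,
      (∀ e, lam e ≠ 0 → e ∈ E) ∧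
      (∀ e, 0 ≤ lam e ∧ lam e ≤ 1) ∧
      (∑ e ∈ E, lam e ≤ 1) ∧
      LinearIndependent ℝ (fun e : {e : Finset V // lam e ≠ 0} =>
        (fun v => if v ∈ (e : Finset V) then (1 : ℝ) else 0 : V → ℝ)) ∧
      (∀ v, ∑ e ∈ E, lam e * (if v ∈ e then (1 : ℝ) else 0) ≤ p v) ∧
      (ε / k ≤ ∑ e ∈ E, lam e ∧ ∑ e ∈ E, lam e ≤ 1 / k) := by
  classical
  set K : Set (Finset V → ℝ) :=
    {lam | (∀ e, 0 ≤ lam e) ∧ (∀ e, e ∉ E → lam e = 0) ∧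
      ∀ v, ∑ e ∈ E, lam e * (if v ∈ e then (1 : ℝ) else 0) ≤ p v} with hKdef
  have hitenn : ∀ (v : V) (e : Finset V), (0:ℝ) ≤ if v ∈ e then (1:ℝ) else 0 := by
    intro v e; split <;> norm_num
  have hloadnn : ∀ lam ∈ K, ∀ v : V,
      0 ≤ ∑ e ∈ E, lam e * (if v ∈ e then (1 : ℝ) else 0) := fun lam hlam v =>
    Finset.sum_nonneg fun e _ => mul_nonneg (hlam.1 e) (hitenn v e)
  have hle1 : ∀ lam ∈ K, ∀ e ∈ E, lam e ≤ 1 := by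
    intro lam hlam e he
    obtain ⟨v, hv⟩ := Finset.card_pos.mp (by rw [hunif e he]; exact hk)
    have h1 : lam e * (if v ∈ e then (1:ℝ) else 0)
        ≤ ∑ e' ∈ E, lam e' * (if v ∈ e' then (1 : ℝ) else 0) :=
      Finset.single_le_sum (f := fun e' => lam e' * (if v ∈ e' then (1:ℝ) else 0))
        (fun e' _ => mul_nonneg (hlam.1 e') (hitenn v e')) he
    rw [if_pos hv, mul_one] at h1
    exact h1.trans ((hlam.2.2 v).trans (hp1 v))
  -- compactness
  have hKclosed : IsClosed K := by
    rw [hKdef]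
    apply IsClosed.inter
    · show IsClosed {lam : Finset V → ℝ | ∀ e, 0 ≤ lam e}
      rw [Set.setOf_forall]
      exact isClosed_iInter fun e => isClosed_le continuous_const (continuous_apply e)
    apply IsClosed.inter
    · show IsClosed {lam : Finset V → ℝ | ∀ e, e ∉ E → lam e = 0}
      rw [Set.setOf_forall]
      refine isClosed_iInter fun e => ?_
      by_cases he : e ∈ E
      · simp [he]
      · simp only [he, not_false_iff, true_implies]
        exact isClosed_eq (continuous_apply e) continuous_const
    · show IsClosed {lam : Finset V → ℝ | ∀ v, (∑ e ∈ E, lam e * if v ∈ e then (1:ℝ) else 0) ≤ p v}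
      rw [Set.setOf_forall]
      refine isClosed_iInter fun v => ?_
      exact isClosed_le (continuous_finset_sum _ fun e _ =>
        (continuous_apply e).mul continuous_const) continuous_const
  have hKsub : K ⊆ Set.univ.pi fun _ : Finset V => Set.Icc (0:ℝ) 1 := by
    intro lam hlam e _
    by_cases he : e ∈ E
    · exact ⟨hlam.1 e, hle1 lam hlam e he⟩
    · rw [hlam.2.1 e he]; exact ⟨le_refl 0, zero_le_one⟩
  have hKcpt : IsCompact K :=
    (isCompact_univ_pi fun _ => isCompact_Icc).of_isClosed_subset hKclosed hKsub
  have hKne : K.Nonempty := ⟨0, fun e => le_refl 0, fun e _ => rfl, fun v => by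
    simpa using hp0 v⟩
  have hfcont : Continuous fun lam : Finset V → ℝ => ∑ e ∈ E, lam e :=
    continuous_finset_sum _ fun e _ => continuous_apply e
  obtain ⟨μ, hμK, hμmax⟩ := hKcpt.exists_isMaxOn hKne hfcont.continuousOn
  set M : ℝ := ∑ e ∈ E, μ e with hM
  have hmaxle : ∀ lam ∈ K, ∑ e ∈ E, lam e ≤ M := fun lam h => hμmax h
  -- pick a maximizer with minimal support
  set S : Set ℕ := {n | ∃ lam, lam ∈ K ∧ ∑ e ∈ E, lam e = M ∧
      (E.filter fun e => lam e ≠ 0).card = n} with hS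
  have hSne : S.Nonempty := ⟨_, μ, hμK, rfl, rfl⟩
  obtain ⟨lam, hlamK, hlamM, hlamcard⟩ := Nat.sInf_mem hSne
  have hsupp : ∀ e, lam e ≠ 0 → e ∈ E := by
    intro e h
    by_contra he
    exact h (hlamK.2.1 e he)
  -- double counting identity
  have hdouble : ∀ c : Finset V → ℝ,
      ∑ v, ∑ e ∈ E, c e * (if v ∈ e then (1 : ℝ) else 0) = k * ∑ e ∈ E, c e := by
    intro c
    rw [Finset.sum_comm, Finset.mul_sum]
    refine Finset.sum_congr rfl fun e he => ?_
    rw [← Finset.mul_sum]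
    have : ∑ v, (if v ∈ e then (1 : ℝ) else 0) = (k : ℝ) := by
      rw [Finset.sum_ite_mem, Finset.univ_inter, Finset.sum_const, nsmul_eq_mul, mul_one,
        hunif e he]
    rw [this]; ring
  -- the tight set is a cover
  set T : Finset V := Finset.univ.filter
      (fun v => ∑ e ∈ E, lam e * (if v ∈ e then (1 : ℝ) else 0) = p v) with hT
  have hTcover : ∀ e ∈ E, (e ∩ T).Nonempty := by
    intro e he
    by_contra hint
    have hstrict : ∀ v ∈ e, ∑ e' ∈ E, lam e' * (if v ∈ e' then (1 : ℝ) else 0) < p v := by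
      intro v hv
      refine lt_of_le_of_ne (hlamK.2.2 v) ?_
      intro heq
      exact hint ⟨v, Finset.mem_inter.mpr ⟨hv,
        Finset.mem_filter.mpr ⟨Finset.mem_univ v, heq⟩⟩⟩
    obtain ⟨v0, hv0⟩ := Finset.card_pos.mp (by rw [hunif e he]; exact hk)
    obtain ⟨v1, hv1, hmin⟩ := e.exists_min_image
      (fun v => p v - ∑ e' ∈ E, lam e' * (if v ∈ e' then (1 : ℝ) else 0)) ⟨v0, hv0⟩
    set δ : ℝ := p v1 - ∑ e' ∈ E, lam e' * (if v1 ∈ e' then (1 : ℝ) else 0) with hδ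
    have hδpos : 0 < δ := sub_pos.mpr (hstrict v1 hv1)
    set lam' : Finset V → ℝ := fun f => lam f + if f = e then δ else 0 with hlam'
    have hK' : lam' ∈ K := by
      refine ⟨fun f => ?_, fun f hf => ?_, fun v => ?_⟩
      · have : (0:ℝ) ≤ if f = e then δ else 0 := by split <;> [exact hδpos.le; rfl]
        have := add_nonneg (hlamK.1 f) this
        simpa [hlam'] using this
      · have hne : f ≠ e := fun h => hf (h ▸ he)
        simp [hlam', hne, hlamK.2.1 f hf]
      · have hexp : ∑ f ∈ E, lam' f * (if v ∈ f then (1:ℝ) else 0)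
            = (∑ f ∈ E, lam f * (if v ∈ f then (1:ℝ) else 0))
              + δ * (if v ∈ e then (1:ℝ) else 0) := by
          simp only [hlam', add_mul, ite_mul, zero_mul]
          rw [Finset.sum_add_distrib,
            Finset.sum_ite_eq' E e (fun f => δ * (if v ∈ f then (1:ℝ) else 0)), if_pos he]
        rw [hexp]
        by_cases hve : v ∈ e
        · have hm := hmin v hve
          rw [if_pos hve, mul_one]
          linarith
        · rw [if_neg hve, mul_zero, add_zero]
          exact hlamK.2.2 v
    have hgt := hmaxle lam' hK'
    have hsum' : ∑ f ∈ E, lam' f = M + δ := by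
      simp only [hlam']
      rw [Finset.sum_add_distrib, Finset.sum_ite_eq' E e (fun _ => δ), if_pos he, hlamM]
    rw [hsum'] at hgt
    linarith
  -- bounds on M
  have hεkM : ε ≤ k * M := by
    have h1 : ε ≤ ∑ v ∈ T, p v := hcover T hTcover
    have h2 : ∑ v ∈ T, p v = ∑ v ∈ T, ∑ e ∈ E, lam e * (if v ∈ e then (1 : ℝ) else 0) :=
      Finset.sum_congr rfl fun v hv => ((Finset.mem_filter.mp hv).2).symm
    have h3 : ∑ v ∈ T, ∑ e ∈ E, lam e * (if v ∈ e then (1 : ℝ) else 0)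
        ≤ ∑ v, ∑ e ∈ E, lam e * (if v ∈ e then (1 : ℝ) else 0) :=
      Finset.sum_le_sum_of_subset_of_nonneg (Finset.subset_univ T)
        (fun v _ _ => hloadnn lam hlamK v)
    have h4 := hdouble lam
    rw [hlamM] at h4
    linarith
  have hkM1 : (k : ℝ) * M ≤ 1 := by
    have h1 : ∑ v, ∑ e ∈ E, lam e * (if v ∈ e then (1 : ℝ) else 0) ≤ ∑ v, p v :=
      Finset.sum_le_sum fun v _ => hlamK.2.2 v
    have h4 := hdouble lam
    rw [hlamM] at h4
    linarith
  have hkpos : (0:ℝ) < k := by exact_mod_cast hk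
  -- linear independence via minimal support
  have hindep : LinearIndependent ℝ (fun e : {e : Finset V // lam e ≠ 0} =>
      (fun v => if v ∈ (e : Finset V) then (1 : ℝ) else 0 : V → ℝ)) := by
    by_contra hdep
    rw [Fintype.not_linearIndependent_iff] at hdep
    obtain ⟨g, hg0, i0, hi0⟩ := hdep
    set c : Finset V → ℝ := fun e => if h : lam e ≠ 0 then g ⟨e, h⟩ else 0 with hc
    have hczero : ∀ e, lam e = 0 → c e = 0 := by
      intro e h; simp [hc, h]
    have hcsupp : ∀ e, c e ≠ 0 → lam e ≠ 0 := by
      intro e h h'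
      exact h (hczero e h')
    have hsum_sub : ∀ f : Finset V → ℝ, (∀ e, lam e = 0 → f e = 0) →
        ∑ e ∈ E, f e = ∑ i : {e : Finset V // lam e ≠ 0}, f i := by
      intro f hf
      rw [← Finset.sum_subtype (Finset.univ.filter fun e => lam e ≠ 0)
        (fun e => by simp) f]
      refine (Finset.sum_subset ?_ ?_).symm
      · intro e heI
        exact hsupp e (Finset.mem_filter.mp heI).2
      · intro e heE heI
        have : lam e = 0 := by
          by_contra h
          exact heI (Finset.mem_filter.mpr ⟨Finset.mem_univ e, h⟩)
        exact hf e this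
    have hcv : ∀ v, ∑ e ∈ E, c e * (if v ∈ e then (1 : ℝ) else 0) = 0 := by
      intro v
      have h := congrFun hg0 v
      simp only [Finset.sum_apply, Pi.smul_apply, smul_eq_mul, Pi.zero_apply] at h
      have h2 := hsum_sub (fun e => c e * (if v ∈ e then (1:ℝ) else 0))
        (fun e he => by simp [hczero e he])
      rw [h2]
      exact (Finset.sum_congr rfl fun i _ => by simp [hc, i.2]).trans h
    have hcsum0 : ∑ e ∈ E, c e = 0 := by
      have h := hdouble c
      rw [Finset.sum_congr rfl (fun v _ => hcv v), Finset.sum_const, smul_zero] at h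
      have hk' : (k:ℝ) ≠ 0 := by positivity
      exact (mul_eq_zero.mp h.symm).resolve_left hk'
    have hexneg : ∃ e ∈ E, c e < 0 := by
      by_contra h
      push_neg at h
      have hall : ∀ e ∈ E, c e = 0 := by
        intro e he
        exact (Finset.sum_eq_zero_iff_of_nonneg (fun e' he' => h e' he')).mp hcsum0 e he
      have hi0E : (i0 : Finset V) ∈ E := hsupp _ i0.2
      have hgc : c i0 = g i0 := by simp [hc, i0.2]
      exact hi0 (by rw [← hgc]; exact hall _ hi0E)
    set N : Finset (Finset V) := E.filter fun e => c e < 0 with hN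
    have hNne : N.Nonempty := by
      obtain ⟨e, he, hce⟩ := hexneg
      exact ⟨e, Finset.mem_filter.mpr ⟨he, hce⟩⟩
    obtain ⟨e0, he0N, he0min⟩ := N.exists_min_image (fun e => lam e / (-c e)) hNne
    have hce0 : c e0 < 0 := (Finset.mem_filter.mp he0N).2
    have hlampos : ∀ e ∈ N, 0 < lam e := by
      intro e heN
      have hce : c e < 0 := (Finset.mem_filter.mp heN).2
      exact (hlamK.1 e).lt_of_ne (Ne.symm (hcsupp e hce.ne))
    set t : ℝ := lam e0 / (-c e0) with ht
    have htpos : 0 < t := div_pos (hlampos e0 he0N) (neg_pos.mpr hce0)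
    set lam' : Finset V → ℝ := fun e => lam e + t * c e with hlam'
    have hnn' : ∀ e, 0 ≤ lam' e := by
      intro e
      rcases le_or_gt 0 (c e) with hce | hce
      · have := add_nonneg (hlamK.1 e) (mul_nonneg htpos.le hce)
        simpa [hlam'] using this
      · have heN : e ∈ N := Finset.mem_filter.mpr ⟨hsupp e (hcsupp e hce.ne), hce⟩
        have hmin := he0min e heN
        have h2 : t * (-c e) ≤ lam e := by
          rw [← le_div_iff₀ (neg_pos.mpr hce)]
          exact hmin
        have : 0 ≤ lam e + t * c e := by linarith
        simpa [hlam'] using this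
    have hK' : lam' ∈ K := by
      refine ⟨hnn', fun e he => ?_, fun v => ?_⟩
      · have h1 : lam e = 0 := hlamK.2.1 e he
        have h2 : c e = 0 := hczero e h1
        simp [hlam', h1, h2]
      · have hexp : ∑ e ∈ E, lam' e * (if v ∈ e then (1 : ℝ) else 0)
            = (∑ e ∈ E, lam e * (if v ∈ e then (1 : ℝ) else 0))
              + t * ∑ e ∈ E, c e * (if v ∈ e then (1 : ℝ) else 0) := by
          rw [Finset.mul_sum, ← Finset.sum_add_distrib]
          refine Finset.sum_congr rfl fun e _ => ?_
          simp only [hlam']; ring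
        rw [hexp, hcv v, mul_zero, add_zero]
        exact hlamK.2.2 v
    have hsum' : ∑ e ∈ E, lam' e = M := by
      simp only [hlam']
      rw [Finset.sum_add_distrib, ← Finset.mul_sum, hcsum0, mul_zero, add_zero, hlamM]
    have hzero' : lam' e0 = 0 := by
      have hne : c e0 ≠ 0 := ne_of_lt hce0
      simp only [hlam', ht]
      rw [div_neg, neg_mul, div_mul_cancel₀ _ hne]
      ring
    have hss : E.filter (fun e => lam' e ≠ 0) ⊂ E.filter (fun e => lam e ≠ 0) := by
      have hsub2 : E.filter (fun e => lam' e ≠ 0) ⊆ E.filter (fun e => lam e ≠ 0) := by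
        intro e heF
        obtain ⟨heE, hne⟩ := Finset.mem_filter.mp heF
        refine Finset.mem_filter.mpr ⟨heE, ?_⟩
        intro h0
        exact hne (by simp [hlam', h0, hczero e h0])
      refine (Finset.ssubset_iff_of_subset hsub2).mpr ⟨e0, ?_, ?_⟩
      · exact Finset.mem_filter.mpr ⟨(Finset.mem_filter.mp he0N).1, (hlampos e0 he0N).ne'⟩
      · intro hmem
        exact (Finset.mem_filter.mp hmem).2 hzero'
    have hmemS : (E.filter fun e => lam' e ≠ 0).card ∈ S := ⟨lam', hK', hsum', rfl⟩
    have hle := Nat.sInf_le hmemS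
    have hlt := Finset.card_lt_card hss
    omega
  refine ⟨lam, hsupp, fun e => ⟨hlamK.1 e, ?_⟩, ?_, hindep, fun v => hlamK.2.2 v, ?_, ?_⟩
  · by_cases he : e ∈ E
    · exact hle1 lam hlamK e he
    · rw [hlamK.2.1 e he]; exact zero_le_one
  · have hk1 : (1:ℝ) ≤ (k:ℝ) := by exact_mod_cast hk
    have hM0 : 0 < M := by nlinarith
    rw [hlamM]
    nlinarith
  · rw [hlamM, div_le_iff₀ hkpos]
    linarith
  · rw [hlamM, le_div_iff₀ hkpos]
    linarith
end

section
/- Let $\varepsilon\in(0,1)$, let $p\in[0,1]^{\binom{[n]}{2}}$ be a sub-probability vector, and let $B=\{b\in[n]:\deg_p(b)\ge\varepsilon/(2n)\}$. Then $\sum_{\{a,c\}}\mathsf{HopD}[p](a,c)-\sum_{\{a,c\}}\mathsf{HopD}[p,B](a,c)\le\varepsilon/2$. -/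
open Finset

/-- `deg_p(a) = (1/2) ∑_b p_{ab}` (with `p` a symmetric matrix, zero diagonal). -/
noncomputable def degp (n : ℕ) (p : Fin n → Fin n → ℝ) (a : Fin n) : ℝ :=
  (∑ b, p a b) / 2

/-- `Walk[p,B]({a,c},b)`; division by zero is zero, matching `0/0 = 0`. -/
noncomputable def walkFn (n : ℕ) (p : Fin n → Fin n → ℝ) (B : Finset (Fin n))
    (a c b : Fin n) : ℝ :=
  if b ∈ B then p a b * p b c / (2 * degp n p b) else 0

/-- `Hop[p,B](a,c) = ∑_{b ∉ {a,c}} Walk[p,B]({a,c},b)`. -/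
noncomputable def hopFn (n : ℕ) (p : Fin n → Fin n → ℝ) (B : Finset (Fin n))
    (a c : Fin n) : ℝ :=
  ∑ b ∈ Finset.univ.filter (fun b => b ≠ a ∧ b ≠ c), walkFn n p B a c b

/-- `max_{b ∉ {a,c}} Walk[p,B]({a,c},b)` (as the supremum of the finite set of
values; the supremum of the empty set of reals is `0`). -/
noncomputable def maxWalkFn (n : ℕ) (p : Fin n → Fin n → ℝ) (B : Finset (Fin n))
    (a c : Fin n) : ℝ :=
  sSup ((fun b => walkFn n p B a c b) '' {b : Fin n | b ≠ a ∧ b ≠ c})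

/-- `HopD[p,B](a,c) = Hop[p,B](a,c) - max_{b ∉ {a,c}} Walk[p,B]({a,c},b)`. -/
noncomputable def hopDFn (n : ℕ) (p : Fin n → Fin n → ℝ) (B : Finset (Fin n))
    (a c : Fin n) : ℝ :=
  hopFn n p B a c - maxWalkFn n p B a c

/-!
Discarding the heavy-degree restriction only adds walks through light vertices. Since
`Walk ≥ 0`, restricting to `B` can only lower the maximum, so `HopD[p] - HopD[p,B]` is at most
the total walk mass through light middle vertices `b ∉ B`. Summed over all pairs, the walks
through a fixed `b` carry mass `(∑ₐ p_{ab})(∑_c p_{bc}) / (2 deg b) = 2 deg b`, and each of the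
at most `n` light vertices has `2 deg b < ε / n`.
-/

section

variable {n : ℕ} {p : Fin n → Fin n → ℝ}

lemma degp_nonneg (hnn : ∀ a b, 0 ≤ p a b) (a : Fin n) : 0 ≤ degp n p a :=
  div_nonneg (sum_nonneg fun b _ => hnn a b) zero_le_two

lemma walkFn_univ_nonneg (hnn : ∀ a b, 0 ≤ p a b) (a c b : Fin n) :
    0 ≤ walkFn n p univ a c b := by
  rw [walkFn, if_pos (mem_univ b)]
  exact div_nonneg (mul_nonneg (hnn a b) (hnn b c))
    (mul_nonneg zero_le_two (degp_nonneg hnn b))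

lemma walkFn_eq_ite (B : Finset (Fin n)) (a c b : Fin n) :
    walkFn n p B a c b = if b ∈ B then walkFn n p univ a c b else 0 := by
  simp only [walkFn, mem_univ, if_true]

lemma walkFn_le_walkFn_univ (hnn : ∀ a b, 0 ≤ p a b) (B : Finset (Fin n)) (a c b : Fin n) :
    walkFn n p B a c b ≤ walkFn n p univ a c b := by
  rw [walkFn_eq_ite]
  split_ifs
  · exact le_rfl
  · exact walkFn_univ_nonneg hnn a c b

lemma maxWalkFn_le_maxWalkFn_univ (hnn : ∀ a b, 0 ≤ p a b) (B : Finset (Fin n)) (a c : Fin n) :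
    maxWalkFn n p B a c ≤ maxWalkFn n p univ a c := by
  unfold maxWalkFn
  rcases Set.eq_empty_or_nonempty {b : Fin n | b ≠ a ∧ b ≠ c} with h | h
  · simp [h]
  · refine csSup_le (h.image _) ?_
    rintro x ⟨b, hb, rfl⟩
    exact (walkFn_le_walkFn_univ hnn B a c b).trans
      (le_csSup ((Set.toFinite _).image _).bddAbove ⟨b, hb, rfl⟩)

lemma hopFn_univ_sub_hopFn_le (hnn : ∀ a b, 0 ≤ p a b) (B : Finset (Fin n)) (a c : Fin n) :
    hopFn n p univ a c - hopFn n p B a c ≤ ∑ b ∈ Bᶜ, walkFn n p univ a c b := by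
  have hdiff : ∀ b, walkFn n p univ a c b - walkFn n p B a c b
      = if b ∈ Bᶜ then walkFn n p univ a c b else 0 := by
    intro b
    simp only [walkFn_eq_ite B, mem_compl]
    split_ifs <;> ring
  rw [hopFn, hopFn, ← sum_sub_distrib]
  calc _ = ∑ b ∈ univ.filter (fun b => b ≠ a ∧ b ≠ c),
          if b ∈ Bᶜ then walkFn n p univ a c b else 0 := sum_congr rfl fun b _ => hdiff b
    _ ≤ ∑ b, if b ∈ Bᶜ then walkFn n p univ a c b else 0 :=
        sum_le_sum_of_subset_of_nonneg (subset_univ _) fun b _ _ => by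
          split_ifs
          · exact walkFn_univ_nonneg hnn a c b
          · exact le_rfl
    _ = ∑ b ∈ Bᶜ, walkFn n p univ a c b := by rw [sum_ite_mem, univ_inter]

lemma hopDFn_univ_sub_hopDFn_le (hnn : ∀ a b, 0 ≤ p a b) (B : Finset (Fin n)) (a c : Fin n) :
    hopDFn n p univ a c - hopDFn n p B a c ≤ ∑ b ∈ Bᶜ, walkFn n p univ a c b := by
  unfold hopDFn
  linarith [maxWalkFn_le_maxWalkFn_univ hnn B a c, hopFn_univ_sub_hopFn_le hnn B a c]

lemma sum_sum_walkFn_univ (hsymm : ∀ a b, p a b = p b a) (b : Fin n) :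
    ∑ a, ∑ c, walkFn n p univ a c b = 2 * degp n p b := by
  have hrow : ∑ c, p b c = 2 * degp n p b := by rw [degp]; ring
  have hcol : ∑ a, p a b = 2 * degp n p b := by simp_rw [hsymm _ b, hrow]
  simp only [walkFn, mem_univ, if_true, ← sum_div, ← sum_mul_sum, hrow, hcol]
  rcases eq_or_ne (degp n p b) 0 with h | h
  · simp [h]
  · field_simp

lemma sum_hopDFn_univ_sub_sum_hopDFn_le (hsymm : ∀ a b, p a b = p b a)
    (hnn : ∀ a b, 0 ≤ p a b) (B : Finset (Fin n)) :
    (∑ a, ∑ c ∈ univ.filter (· ≠ a), hopDFn n p univ a c)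
      - (∑ a, ∑ c ∈ univ.filter (· ≠ a), hopDFn n p B a c)
      ≤ ∑ b ∈ Bᶜ, 2 * degp n p b :=
  calc _ = ∑ a, ∑ c ∈ univ.filter (· ≠ a), (hopDFn n p univ a c - hopDFn n p B a c) := by
        simp only [← sum_sub_distrib]
    _ ≤ ∑ a, ∑ c ∈ univ.filter (· ≠ a), ∑ b ∈ Bᶜ, walkFn n p univ a c b := by
        gcongr with a _ c _
        exact hopDFn_univ_sub_hopDFn_le hnn B a c
    _ ≤ ∑ a, ∑ c, ∑ b ∈ Bᶜ, walkFn n p univ a c b := by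
        gcongr with a _
        · exact fun c _ _ => sum_nonneg fun b _ => walkFn_univ_nonneg hnn a c b
        · exact subset_univ _
    _ = ∑ a, ∑ b ∈ Bᶜ, ∑ c, walkFn n p univ a c b := sum_congr rfl fun a _ => sum_comm
    _ = ∑ b ∈ Bᶜ, ∑ a, ∑ c, walkFn n p univ a c b := sum_comm
    _ = ∑ b ∈ Bᶜ, 2 * degp n p b := sum_congr rfl fun b _ => sum_sum_walkFn_univ hsymm b

lemma sum_two_mul_degp_le_of_lt {ε : ℝ} (hε : 0 ≤ ε) (C : Finset (Fin n))
    (hC : ∀ b ∈ C, degp n p b < ε / (2 * n)) :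
    ∑ b ∈ C, 2 * degp n p b ≤ ε :=
  calc _ ≤ C.card • (ε / n) := sum_le_card_nsmul _ _ _ fun b hb => by
        linarith [hC b hb, show ε / (2 * n) = ε / n / 2 by ring]
    _ ≤ n * (ε / n) := by
        rw [nsmul_eq_mul]
        gcongr
        exact_mod_cast (card_le_univ C).trans_eq (Fintype.card_fin n)
    _ ≤ ε := by
        rcases n.eq_zero_or_pos with rfl | hn
        · simpa using hε
        · rw [mul_div_cancel₀ _ (by positivity)]

end

theorem stmt11_general (n : ℕ) (ε : ℝ) (hε0 : 0 < ε)
    (p : Fin n → Fin n → ℝ)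
    (hsymm : ∀ a b, p a b = p b a)
    (hnn : ∀ a b, 0 ≤ p a b)
    (B : Finset (Fin n))
    (hB : B = Finset.univ.filter (fun b => ε / (2 * n) ≤ degp n p b)) :
    (∑ a, ∑ c ∈ Finset.univ.filter (· ≠ a), hopDFn n p Finset.univ a c) / 2
      - (∑ a, ∑ c ∈ Finset.univ.filter (· ≠ a), hopDFn n p B a c) / 2
      ≤ ε / 2 := by
  have hlight : ∀ b ∈ Bᶜ, degp n p b < ε / (2 * n) := by
    intro b hb
    simpa [hB] using hb
  linarith [sum_hopDFn_univ_sub_sum_hopDFn_le hsymm hnn B,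
    sum_two_mul_degp_le_of_lt hε0.le Bᶜ hlight]

theorem stmt11 (n : ℕ) (ε : ℝ) (hε0 : 0 < ε) (hε1 : ε < 1)
    (p : Fin n → Fin n → ℝ)
    (hsymm : ∀ a b, p a b = p b a) (hdiag : ∀ a, p a a = 0)
    (hnn : ∀ a b, 0 ≤ p a b) (hle : ∀ a b, p a b ≤ 1)
    (hsub : (∑ a, ∑ b, p a b) / 2 ≤ 1)
    (B : Finset (Fin n))
    (hB : B = Finset.univ.filter (fun b => ε / (2 * n) ≤ degp n p b)) :
    (∑ a, ∑ c ∈ Finset.univ.filter (· ≠ a), hopDFn n p Finset.univ a c) / 2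
      - (∑ a, ∑ c ∈ Finset.univ.filter (· ≠ a), hopDFn n p B a c) / 2
      ≤ ε / 2 :=
  stmt11_general n ε hε0 p hsymm hnn B hB
end

section
/- Let $k$ be a positive integer and suppose for each $b\in[n]$ we are given a nonnegative real $\gamma_b$ and a finite set $S_b\subseteq([n]\setminus\{b\})\times([n]\setminus\{b\})$ which is symmetric and contains the diagonal $\{(a,a):a\ne b\}$, with $\sum_{b=1}^n |S_b| = 2n(n-1)$. If each $\gamma_b \le \sum_{(a,c)\in S_b} p_{ab}p_{cb}$ for nonnegative reals $(p_{ab})$, then $\sum_{\{a,b\}\in\binom{[n]}{2}} p_{ab}^4 \ge \frac{1}{8n^{9/2}}\left(\sum_{b=1}^n\sqrt{\gamma_b}\right)^4$. -/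
open Finset

theorem stmt13 (n : ℕ) (γ : Fin n → ℝ) (hγ : ∀ b, 0 ≤ γ b)
    (S : Fin n → Finset (Fin n × Fin n))
    (hcard : ∑ b, (S b).card = 2 * n * (n - 1))
    (hsub : ∀ b, ∀ q ∈ S b, q.1 ≠ b ∧ q.2 ≠ b)
    (hSsymm : ∀ b a c, (a, c) ∈ S b → (c, a) ∈ S b)
    (hSdiag : ∀ b a, a ≠ b → (a, a) ∈ S b)
    (p : Fin n → Fin n → ℝ) (hp : ∀ a b, 0 ≤ p a b)
    (hpsymm : ∀ a b, p a b = p b a)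
    (hγle : ∀ b, γ b ≤ ∑ q ∈ S b, p q.1 b * p q.2 b) :
    (1 / (8 * (n : ℝ) ^ ((9 : ℝ) / 2))) * (∑ b, Real.sqrt (γ b)) ^ 4
      ≤ (∑ b, ∑ a ∈ Finset.univ.filter (· ≠ b), p a b ^ 4) / 2 := by
  set Q : Fin n → ℝ := fun b => ∑ a ∈ Finset.univ.filter (· ≠ b), p a b ^ 4 with hQdef
  have hQ0 : ∀ b, 0 ≤ Q b := fun b =>
    Finset.sum_nonneg fun a _ => pow_nonneg (hp a b) 4
  set s : Fin n → ℝ := fun b => ((S b).card : ℝ) with hsdef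
  have hs0 : ∀ b, 0 ≤ s b := fun b => Nat.cast_nonneg _
  set u : Fin n → ℝ := fun b => Real.sqrt (s b) with hudef
  have hu0 : ∀ b, 0 ≤ u b := fun b => Real.sqrt_nonneg _
  set v : Fin n → ℝ := fun b => Real.sqrt (Q b) with hvdef
  have hv0 : ∀ b, 0 ≤ v b := fun b => Real.sqrt_nonneg _
  have key : ∀ b, γ b ^ 2 ≤ s b * (u b * Q b) := by
    intro b
    have hT0 : ∀ q ∈ S b, (0:ℝ) ≤ p q.1 b * p q.2 b := fun q _ =>
      mul_nonneg (hp _ _) (hp _ _)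
    have h1 : γ b ^ 2 ≤ (∑ q ∈ S b, p q.1 b * p q.2 b) ^ 2 :=
      pow_le_pow_left₀ (hγ b) (hγle b) 2
    have h2 : (∑ q ∈ S b, p q.1 b * p q.2 b) ^ 2
        ≤ s b * ∑ q ∈ S b, (p q.1 b * p q.2 b) ^ 2 := by
      have := Finset.sum_mul_sq_le_sq_mul_sq (S b) (fun _ => (1:ℝ))
        (fun q => p q.1 b * p q.2 b)
      simpa [hsdef] using this
    -- second Cauchy-Schwarz on the inner sum
    have h3 : (∑ q ∈ S b, (p q.1 b * p q.2 b) ^ 2) ^ 2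
        ≤ s b * ∑ q ∈ S b, (p q.1 b) ^ 4 * (p q.2 b) ^ 4 := by
      have := Finset.sum_mul_sq_le_sq_mul_sq (S b) (fun _ => (1:ℝ))
        (fun q => (p q.1 b * p q.2 b) ^ 2)
      calc (∑ q ∈ S b, (p q.1 b * p q.2 b) ^ 2) ^ 2
          ≤ (∑ _q ∈ S b, (1:ℝ) ^ 2) * ∑ q ∈ S b, ((p q.1 b * p q.2 b) ^ 2) ^ 2 := by
            simpa using this
        _ = s b * ∑ q ∈ S b, (p q.1 b) ^ 4 * (p q.2 b) ^ 4 := by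
            rw [show ∑ _q ∈ S b, (1:ℝ) ^ 2 = s b by simp [hsdef]]
            congr 1
            exact Finset.sum_congr rfl fun q _ => by ring
    have h4 : ∑ q ∈ S b, (p q.1 b) ^ 4 * (p q.2 b) ^ 4 ≤ Q b ^ 2 := by
      have hsub' : S b ⊆ (Finset.univ.filter (· ≠ b)) ×ˢ (Finset.univ.filter (· ≠ b)) := by
        intro q hq
        obtain ⟨h1', h2'⟩ := hsub b q hq
        simp [Finset.mem_product, h1', h2']
      calc ∑ q ∈ S b, (p q.1 b) ^ 4 * (p q.2 b) ^ 4
          ≤ ∑ q ∈ (Finset.univ.filter (· ≠ b)) ×ˢ (Finset.univ.filter (· ≠ b)),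
              (p q.1 b) ^ 4 * (p q.2 b) ^ 4 := by
            apply Finset.sum_le_sum_of_subset_of_nonneg hsub'
            intro q _ _
            exact mul_nonneg (pow_nonneg (hp _ _) 4) (pow_nonneg (hp _ _) 4)
        _ = Q b ^ 2 := by
            rw [Finset.sum_product]
            simp only [← Finset.sum_mul, ← Finset.mul_sum, hQdef]
            rw [sq]
    -- combine h3 and h4: inner sum ≤ sqrt(s b) * Q b
    have h5 : ∑ q ∈ S b, (p q.1 b * p q.2 b) ^ 2 ≤ u b * Q b := by
      have hnn : 0 ≤ ∑ q ∈ S b, (p q.1 b * p q.2 b) ^ 2 :=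
        Finset.sum_nonneg fun q _ => sq_nonneg _
      have : (∑ q ∈ S b, (p q.1 b * p q.2 b) ^ 2) ^ 2 ≤ (u b * Q b) ^ 2 := by
        calc (∑ q ∈ S b, (p q.1 b * p q.2 b) ^ 2) ^ 2
            ≤ s b * (Q b ^ 2) := le_trans h3 (by
              have := mul_le_mul_of_nonneg_left h4 (hs0 b)
              linarith)
          _ = (u b * Q b) ^ 2 := by
              rw [mul_pow, hudef]
              rw [Real.sq_sqrt (hs0 b)]
      have huQ : 0 ≤ u b * Q b := mul_nonneg (hu0 b) (hQ0 b)
      nlinarith [this, hnn, huQ]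
    calc γ b ^ 2 ≤ s b * ∑ q ∈ S b, (p q.1 b * p q.2 b) ^ 2 := le_trans h1 h2
      _ ≤ s b * (u b * Q b) := mul_le_mul_of_nonneg_left h5 (hs0 b)
  -- hence sqrt(γ b) ≤ sqrt(u b) * sqrt(sqrt(u b) * v b)
  have key2 : ∀ b, Real.sqrt (γ b) ≤ Real.sqrt (u b) * Real.sqrt (Real.sqrt (u b) * v b) := by
    intro b
    have hγle' : γ b ≤ u b * (Real.sqrt (u b) * v b) := by
      have h := key b
      have : γ b ≤ Real.sqrt (s b * (u b * Q b)) := by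
        have := Real.sqrt_le_sqrt (key b)
        rwa [Real.sqrt_sq (hγ b)] at this
      calc γ b ≤ Real.sqrt (s b * (u b * Q b)) := this
        _ = u b * (Real.sqrt (u b) * v b) := by
            rw [Real.sqrt_mul (hs0 b), Real.sqrt_mul (hu0 b), hudef, hvdef]
    calc Real.sqrt (γ b) ≤ Real.sqrt (u b * (Real.sqrt (u b) * v b)) :=
        Real.sqrt_le_sqrt hγle'
      _ = Real.sqrt (u b) * Real.sqrt (Real.sqrt (u b) * v b) :=
        Real.sqrt_mul (hu0 b) _
  set X : ℝ := ∑ b, Real.sqrt (γ b) with hXdef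
  have hX0 : 0 ≤ X := Finset.sum_nonneg fun b _ => Real.sqrt_nonneg _
  set A : ℝ := ∑ b, u b with hAdef
  have hA0 : 0 ≤ A := Finset.sum_nonneg fun b _ => hu0 b
  set B : ℝ := ∑ b, Real.sqrt (u b) * v b with hBdef
  have hB0 : 0 ≤ B := Finset.sum_nonneg fun b _ => mul_nonneg (Real.sqrt_nonneg _) (hv0 b)
  set Qt : ℝ := ∑ b, Q b with hQtdef
  have hQt0 : 0 ≤ Qt := Finset.sum_nonneg fun b _ => hQ0 b
  -- X^2 ≤ A * B
  have hXsq : X ^ 2 ≤ A * B := by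
    have hXle : X ≤ ∑ b, Real.sqrt (u b) * Real.sqrt (Real.sqrt (u b) * v b) :=
      Finset.sum_le_sum fun b _ => key2 b
    have hcs := Finset.sum_mul_sq_le_sq_mul_sq Finset.univ
      (fun b => Real.sqrt (u b)) (fun b => Real.sqrt (Real.sqrt (u b) * v b))
    have heq1 : ∀ b : Fin n, Real.sqrt (u b) ^ 2 = u b := fun b => Real.sq_sqrt (hu0 b)
    have heq2 : ∀ b : Fin n, Real.sqrt (Real.sqrt (u b) * v b) ^ 2 = Real.sqrt (u b) * v b :=
      fun b => Real.sq_sqrt (mul_nonneg (Real.sqrt_nonneg _) (hv0 b))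
    calc X ^ 2 ≤ (∑ b, Real.sqrt (u b) * Real.sqrt (Real.sqrt (u b) * v b)) ^ 2 :=
        pow_le_pow_left₀ hX0 hXle 2
      _ ≤ (∑ b, Real.sqrt (u b) ^ 2) * ∑ b, Real.sqrt (Real.sqrt (u b) * v b) ^ 2 := hcs
      _ = A * B := by
          rw [hAdef, hBdef]
          congr 1
          · exact Finset.sum_congr rfl fun b _ => heq1 b
          · exact Finset.sum_congr rfl fun b _ => heq2 b
  have hXsq' : X ^ 2 ≤ A * B := hXsq
  -- B^2 ≤ A * Qt
  have hBsq : B ^ 2 ≤ A * Qt := by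
    have hcs := Finset.sum_mul_sq_le_sq_mul_sq Finset.univ
      (fun b => Real.sqrt (u b)) v
    calc B ^ 2 ≤ (∑ b, Real.sqrt (u b) ^ 2) * ∑ b, v b ^ 2 := hcs
      _ = A * Qt := by
          rw [hAdef, hQtdef]; congr 1
          · exact Finset.sum_congr rfl fun b _ => Real.sq_sqrt (hu0 b)
          · exact Finset.sum_congr rfl fun b _ => Real.sq_sqrt (hQ0 b)
  -- A^2 ≤ 2 * n^3
  have hAsq : A ^ 2 ≤ 2 * (n : ℝ) ^ 3 := by
    have hcs := Finset.sum_mul_sq_le_sq_mul_sq Finset.univ (fun _ : Fin n => (1:ℝ)) u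
    have h1 : A ^ 2 ≤ (n : ℝ) * ∑ b, s b := by
      calc A ^ 2 = (∑ b, (1:ℝ) * u b) ^ 2 := by simp [hAdef]
        _ ≤ (∑ _b : Fin n, (1:ℝ) ^ 2) * ∑ b, u b ^ 2 := hcs
        _ = (n : ℝ) * ∑ b, s b := by
            simp only [one_pow, Finset.sum_const, Finset.card_univ, Fintype.card_fin,
              nsmul_eq_mul, mul_one]
            congr 1
            exact Finset.sum_congr rfl fun b _ => Real.sq_sqrt (hs0 b)
    have h2 : ∑ b, s b = ((2 * n * (n - 1) : ℕ) : ℝ) := by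
      rw [← hcard]; push_cast [hsdef]; rfl
    have h3 : ((2 * n * (n - 1) : ℕ) : ℝ) ≤ 2 * (n : ℝ) ^ 2 := by
      have : (2 * n * (n - 1) : ℕ) ≤ 2 * n ^ 2 := by
        calc 2 * n * (n - 1) ≤ 2 * n * n := by
              exact Nat.mul_le_mul_left _ (Nat.sub_le n 1)
          _ = 2 * n ^ 2 := by ring
      calc ((2 * n * (n - 1) : ℕ) : ℝ) ≤ ((2 * n ^ 2 : ℕ) : ℝ) := Nat.cast_le.mpr this
        _ = 2 * (n : ℝ) ^ 2 := by push_cast; ring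
    calc A ^ 2 ≤ (n : ℝ) * ∑ b, s b := h1
      _ = (n : ℝ) * ((2 * n * (n - 1) : ℕ) : ℝ) := by rw [h2]
      _ ≤ (n : ℝ) * (2 * (n : ℝ) ^ 2) :=
          mul_le_mul_of_nonneg_left h3 (Nat.cast_nonneg n)
      _ = 2 * (n : ℝ) ^ 3 := by ring
  -- A^3 ≤ 4 * n^(9/2)
  set c : ℝ := (n : ℝ) ^ ((9 : ℝ) / 2) with hcdef
  have hc0 : 0 ≤ c := Real.rpow_nonneg (Nat.cast_nonneg n) _
  have hcsq : c ^ 2 = (n : ℝ) ^ (9 : ℕ) := by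
    rw [hcdef, ← Real.rpow_natCast ((n:ℝ) ^ ((9:ℝ)/2)) 2, ← Real.rpow_mul (Nat.cast_nonneg n),
      ← Real.rpow_natCast (n:ℝ) 9]
    norm_num
  have hA3 : A ^ 3 ≤ 4 * c := by
    have h6 : (A ^ 3) ^ 2 ≤ (4 * c) ^ 2 := by
      have : (A ^ 3) ^ 2 = (A ^ 2) ^ 3 := by ring
      rw [this]
      have h7 : (A ^ 2) ^ 3 ≤ (2 * (n:ℝ) ^ 3) ^ 3 :=
        pow_le_pow_left₀ (sq_nonneg A) hAsq 3
      calc (A ^ 2) ^ 3 ≤ (2 * (n:ℝ) ^ 3) ^ 3 := h7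
        _ = 8 * (n:ℝ) ^ (9:ℕ) := by ring
        _ ≤ 16 * (n:ℝ) ^ (9:ℕ) := by
            have : (0:ℝ) ≤ (n:ℝ) ^ (9:ℕ) := pow_nonneg (Nat.cast_nonneg n) 9
            linarith
        _ = (4 * c) ^ 2 := by rw [mul_pow, hcsq]; ring
    have hA30 : 0 ≤ A ^ 3 := pow_nonneg hA0 3
    have h4c0 : 0 ≤ 4 * c := by linarith
    nlinarith [h6, hA30, h4c0]
  -- final combine
  have hX4 : X ^ 4 ≤ A ^ 3 * Qt := by
    calc X ^ 4 = (X ^ 2) ^ 2 := by ring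
      _ ≤ (A * B) ^ 2 := pow_le_pow_left₀ (sq_nonneg X) hXsq' 2
      _ = A ^ 2 * B ^ 2 := by ring
      _ ≤ A ^ 2 * (A * Qt) := mul_le_mul_of_nonneg_left hBsq (sq_nonneg A)
      _ = A ^ 3 * Qt := by ring
  have hfinal : X ^ 4 ≤ 4 * c * Qt := by
    calc X ^ 4 ≤ A ^ 3 * Qt := hX4
      _ ≤ 4 * c * Qt := mul_le_mul_of_nonneg_right hA3 hQt0
  rcases Nat.eq_zero_or_pos n with hn | hn
  · subst hn
    norm_num [hXdef, hQtdef]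
  · have hcpos : 0 < c := Real.rpow_pos_of_pos (by exact_mod_cast hn) _
    have h8c : (0:ℝ) < 8 * c := by linarith
    calc (1 / (8 * c)) * X ^ 4 = X ^ 4 / (8 * c) := by ring
      _ ≤ Qt / 2 := by
          rw [div_le_div_iff₀ h8c (by norm_num : (0:ℝ) < 2)]
          nlinarith [hfinal, hcpos]
end

section
/- Suppose $E\subseteq\binom{[n]}{2}$ is such that every edge of $E$ is contained in exactly one triangle of $E$, and $y\in\mathbb{F}_2^E$ satisfies $y_{ab}+y_{bc}+y_{ca}=1$ for every triangle $\{\{a,b\},\{b,c\},\{c,a\}\}\subseteq E$. Then the graph on vertex set $[n]\times\mathbb{F}_2$ with edge set $R_y(E)=\{\{(a,t),(b,y_{ab}+t)\}: \{a,b\}\in E, t\in\mathbb{F}_2\}$ is triangle-free. -/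
lemma ry_edge {n : ℕ} {E : Set (Sym2 (Fin n))} (hnd : ∀ e ∈ E, ¬ e.IsDiag)
    {y : Sym2 (Fin n) → ZMod 2} {u v : Fin n × ZMod 2}
    (h : s(u, v) ∈ {e | ∃ a b : Fin n, ∃ t : ZMod 2,
      s(a, b) ∈ E ∧ e = s((a, t), (b, y s(a, b) + t))}) :
    s(u.1, v.1) ∈ E ∧ u.1 ≠ v.1 ∧ y s(u.1, v.1) = u.2 + v.2 := by
  obtain ⟨a, b, t, hE, heq⟩ := h
  have hab : a ≠ b := by
    intro hd; exact hnd _ hE (by simp [hd])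
  have htt : ∀ s : ZMod 2, s + s = 0 := by decide
  rw [Sym2.eq_iff] at heq
  rcases heq with ⟨hu, hv⟩ | ⟨hu, hv⟩
  · subst hu; subst hv
    refine ⟨hE, hab, ?_⟩
    simp only
    rw [add_comm t, add_assoc, htt, add_zero]
  · subst hu; subst hv
    refine ⟨by rwa [Sym2.eq_swap], fun h => hab h.symm, ?_⟩
    simp only
    rw [Sym2.eq_swap, add_assoc, htt, add_zero]

/-- The edge set `R_y(E)` on the vertex set `[n] × 𝔽₂`. -/
def Ry (n : ℕ) (E : Set (Sym2 (Fin n))) (y : Sym2 (Fin n) → ZMod 2) :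
    Set (Sym2 (Fin n × ZMod 2)) :=
  {e | ∃ a b : Fin n, ∃ t : ZMod 2,
    s(a, b) ∈ E ∧ e = s((a, t), (b, y s(a, b) + t))}

/-- An edge set `F` contains a triangle. -/
def HasTriangle {V : Type} (F : Set (Sym2 V)) : Prop :=
  ∃ u v w : V, u ≠ v ∧ v ≠ w ∧ u ≠ w ∧
    s(u, v) ∈ F ∧ s(v, w) ∈ F ∧ s(u, w) ∈ F

theorem stmt15 (n : ℕ) (E : Set (Sym2 (Fin n)))
    (hnd : ∀ e ∈ E, ¬ e.IsDiag)
    (honce : ∀ e ∈ E, ∃! T : Set (Sym2 (Fin n)),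
      (∃ a b c : Fin n, a ≠ b ∧ b ≠ c ∧ a ≠ c ∧
        T = {s(a, b), s(b, c), s(a, c)} ∧ T ⊆ E) ∧ e ∈ T)
    (y : Sym2 (Fin n) → ZMod 2)
    (hy : ∀ a b c : Fin n, a ≠ b → b ≠ c → a ≠ c →
      s(a, b) ∈ E → s(b, c) ∈ E → s(a, c) ∈ E →
      y s(a, b) + y s(b, c) + y s(a, c) = 1) :
    ¬ HasTriangle (Ry n E y) := by
  rintro ⟨u, v, w, -, -, -, h1, h2, h3⟩
  obtain ⟨e1, d1, y1⟩ := ry_edge hnd h1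
  obtain ⟨e2, d2, y2⟩ := ry_edge hnd h2
  obtain ⟨e3, d3, y3⟩ := ry_edge hnd h3
  have hsum := hy u.1 v.1 w.1 d1 d2 d3 e1 e2 e3
  rw [y1, y2, y3] at hsum
  have : ∀ a b c : ZMod 2, (a + b) + (b + c) + (a + c) = 0 := by decide
  rw [this] at hsum
  exact zero_ne_one hsum
end
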